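/- Main Theorem: If ‖·‖_α is a uniform crossnorm, then the operator norm ‖·‖_{[α,α]} on B[X⊗_α Y, V⊗_α W], when restricted to B[X,V]⊗B[Y,W], satisfies ‖L‖_ε ≤ ‖L‖_{[α,α]} ≤ ‖L‖_π for every L ∈ B[X,V]⊗B[Y,W], and hence ‖·‖_{[α,α]} is a reasonable crossnorm on B[X,V]⊗B[Y,W]. -/

import Mathlib

/-!
Each `A ⊗ B` acts on `X ⊗_α Y` with operator norm at most `‖A‖‖B‖` because `α` is uniform, so
the triangle inequality bounds `‖L‖_{[α,α]}` by every representation `Σ ‖Aᵢ‖‖Bᵢ‖`, hence by `‖L‖_π`.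

For the injective bound, contract `L` with a functional `g` on `B[Y,W]` to get
`(id ⊗ g) L ∈ B[X,V]`. Evaluated at `x` and tested against `φ ∈ V'`, it becomes `g` applied to
`((φ ∘ evₓ) ⊗ id) L ∈ B[Y,W]`, whose values tested against `ψ ∈ W'` are `(φ ⊗ ψ)(L (x ⊗ y))`.
As `α` is reasonable on `V ⊗ W` and a crossnorm on `X ⊗ Y`, these are at
most `‖φ‖‖ψ‖‖L‖_{[α,α]}‖x‖‖y‖`. Two applications of Hahn–Banach then give
`|(f ⊗ g) L| ≤ ‖f‖‖g‖‖L‖_{[α,α]}`, which is the injective bound and, since such functionals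
separate the points of an algebraic tensor product, also the definiteness of `‖·‖_{[α,α]}`.
-/

open scoped TensorProduct
open TensorProduct

noncomputable section

variable (𝕜 : Type*) [RCLike 𝕜]
variable {E F G H : Type*}
  [NormedAddCommGroup E] [NormedSpace 𝕜 E]
  [NormedAddCommGroup F] [NormedSpace 𝕜 F]
  [NormedAddCommGroup G] [NormedSpace 𝕜 G]
  [NormedAddCommGroup H] [NormedSpace 𝕜 H]

/-- `N` is a norm on the `𝕜`-module `M`. -/
def IsNormOn {M : Type*} [AddCommGroup M] [Module 𝕜 M] (N : M → ℝ) : Prop :=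
  (∀ u, N u = 0 ↔ u = 0) ∧ (∀ (c : 𝕜) (u : M), N (c • u) = ‖c‖ * N u) ∧
    (∀ u v : M, N (u + v) ≤ N u + N v)

/-- The linear functional `f ⊗ g` on `E ⊗ F`, with `(f ⊗ g)(x ⊗ y) = f x * g y`. -/
def dualTensorFun (f : E →L[𝕜] 𝕜) (g : F →L[𝕜] 𝕜) : E ⊗[𝕜] F →ₗ[𝕜] 𝕜 :=
  (TensorProduct.lid 𝕜 𝕜).toLinearMap ∘ₗ
    TensorProduct.map (f : E →ₗ[𝕜] 𝕜) (g : F →ₗ[𝕜] 𝕜)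

/-- The injective norm on the algebraic tensor product of normed spaces. -/
def injNorm (u : E ⊗[𝕜] F) : ℝ :=
  sSup {r | ∃ (f : E →L[𝕜] 𝕜) (g : F →L[𝕜] 𝕜),
    ‖f‖ ≤ 1 ∧ ‖g‖ ≤ 1 ∧ r = ‖dualTensorFun 𝕜 f g u‖}

/-- The projective norm on the algebraic tensor product of normed spaces. -/
def projNorm (u : E ⊗[𝕜] F) : ℝ :=
  sInf {r | ∃ l : List (E × F), u = (l.map fun p => p.1 ⊗ₜ[𝕜] p.2).sum ∧
    r = (l.map fun p => ‖p.1‖ * ‖p.2‖).sum}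

/-- `N` is a reasonable crossnorm on `E ⊗ F`: it is a norm, `N (x ⊗ y) ≤ ‖x‖‖y‖`, and every
`f ⊗ g` with `f, g` continuous functionals is bounded with dual norm at most `‖f‖‖g‖`. -/
def IsReasonableCrossnorm (N : E ⊗[𝕜] F → ℝ) : Prop :=
  IsNormOn 𝕜 N ∧ (∀ (x : E) (y : F), N (x ⊗ₜ[𝕜] y) ≤ ‖x‖ * ‖y‖) ∧
    ∀ (f : E →L[𝕜] 𝕜) (g : F →L[𝕜] 𝕜) (u : E ⊗[𝕜] F),
      ‖dualTensorFun 𝕜 f g u‖ ≤ ‖f‖ * ‖g‖ * N u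

/-- `T` is bounded from `(E ⊗ F, Nd)` to `(G ⊗ H, Nc)`. -/
def IsBddOn (Nd : E ⊗[𝕜] F → ℝ) (Nc : G ⊗[𝕜] H → ℝ)
    (T : E ⊗[𝕜] F →ₗ[𝕜] G ⊗[𝕜] H) : Prop :=
  ∃ c : ℝ, 0 ≤ c ∧ ∀ u, Nc (T u) ≤ c * Nd u

/-- The operator norm of `T` from `(E ⊗ F, Nd)` to `(G ⊗ H, Nc)`. -/
def opNormOn (Nd : E ⊗[𝕜] F → ℝ) (Nc : G ⊗[𝕜] H → ℝ)
    (T : E ⊗[𝕜] F →ₗ[𝕜] G ⊗[𝕜] H) : ℝ :=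
  sInf {c | 0 ≤ c ∧ ∀ u, Nc (T u) ≤ c * Nd u}

/-- The dual norm of a linear functional `φ` on `(E ⊗ F, N)`. -/
def dualNormOn (N : E ⊗[𝕜] F → ℝ) (φ : E ⊗[𝕜] F →ₗ[𝕜] 𝕜) : ℝ :=
  sInf {c | 0 ≤ c ∧ ∀ u, ‖φ u‖ ≤ c * N u}

/-- The pair of norms `(NA, NB)` is uniform: `A ⊗ B` is bounded with bound `‖A‖‖B‖`. -/
def IsUniformPair (NA : E ⊗[𝕜] F → ℝ) (NB : G ⊗[𝕜] H → ℝ) : Prop :=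
  ∀ (A : E →L[𝕜] G) (B : F →L[𝕜] H) (u : E ⊗[𝕜] F),
    NB (TensorProduct.map (A : E →ₗ[𝕜] G) (B : F →ₗ[𝕜] H) u) ≤ ‖A‖ * ‖B‖ * NA u

/-- The canonical action of `B[E,G] ⊗ B[F,H]` as linear maps from `E ⊗ F` to `G ⊗ H`,
sending `Σⱼ Aⱼ ⊗ Bⱼ` to `Σᵢ xᵢ ⊗ yᵢ ↦ Σⱼ Σᵢ Aⱼxᵢ ⊗ Bⱼyᵢ`. -/
def opT : ((E →L[𝕜] G) ⊗[𝕜] (F →L[𝕜] H)) →ₗ[𝕜] (E ⊗[𝕜] F →ₗ[𝕜] G ⊗[𝕜] H) :=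
  (TensorProduct.homTensorHomMap (RingHom.id 𝕜) E F G H) ∘ₗ
    TensorProduct.map (ContinuousLinearMap.coeLM 𝕜) (ContinuousLinearMap.coeLM 𝕜)

variable {X Y V W : Type*}
  [NormedAddCommGroup X] [NormedSpace 𝕜 X]
  [NormedAddCommGroup Y] [NormedSpace 𝕜 Y]
  [NormedAddCommGroup V] [NormedSpace 𝕜 V]
  [NormedAddCommGroup W] [NormedSpace 𝕜 W]

section

variable {𝕜}

theorem IsNormOn.map_zero {M : Type*} [AddCommGroup M] [Module 𝕜 M] {N : M → ℝ}
    (hN : IsNormOn 𝕜 N) : N 0 = 0 :=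
  (hN.1 0).2 rfl

theorem IsNormOn.nonneg {M : Type*} [AddCommGroup M] [Module 𝕜 M] {N : M → ℝ}
    (hN : IsNormOn 𝕜 N) (u : M) : 0 ≤ N u := by
  have hneg : N (-u) = N u := by simpa using hN.2.1 (-1) u
  have := hN.2.2 u (-u)
  rw [add_neg_cancel, hN.map_zero, hneg] at this
  linarith

theorem IsNormOn.of_smul_le {M : Type*} [AddCommGroup M] [Module 𝕜 M] {N : M → ℝ}
    (h_eq_zero : ∀ u, N u = 0 ↔ u = 0) (h_add : ∀ u v, N (u + v) ≤ N u + N v)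
    (h_smul : ∀ (c : 𝕜) u, N (c • u) ≤ ‖c‖ * N u) : IsNormOn 𝕜 N :=
  let p := Seminorm.ofSMulLE N ((h_eq_zero 0).2 rfl) h_add h_smul
  ⟨h_eq_zero, map_smul_eq_mul p, h_add⟩

section OpNormOn

variable {Nd : E ⊗[𝕜] F → ℝ} {Nc : G ⊗[𝕜] H → ℝ} {T S : E ⊗[𝕜] F →ₗ[𝕜] G ⊗[𝕜] H}

theorem opNormOn_nonneg : 0 ≤ opNormOn 𝕜 Nd Nc T :=
  Real.sInf_nonneg fun _ hc => hc.1

theorem opNormOn_le_of_bound {c : ℝ} (hc : 0 ≤ c) (h : ∀ u, Nc (T u) ≤ c * Nd u) :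
    opNormOn 𝕜 Nd Nc T ≤ c :=
  csInf_le ⟨0, fun _ hc => hc.1⟩ ⟨hc, h⟩

theorem IsBddOn.le_opNormOn_mul (hNd : ∀ u, 0 ≤ Nd u) (hT : IsBddOn 𝕜 Nd Nc T) (u : E ⊗[𝕜] F) :
    Nc (T u) ≤ opNormOn 𝕜 Nd Nc T * Nd u := by
  obtain ⟨c, hc, hcT⟩ := hT
  rcases (hNd u).eq_or_lt with hu | hu
  · simpa [← hu] using hcT u
  · rw [← div_le_iff₀ hu]
    exact le_csInf ⟨c, hc, hcT⟩ fun c' hc' => (div_le_iff₀ hu).2 (hc'.2 u)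

theorem isBddOn_zero (hNc : Nc 0 = 0) : IsBddOn 𝕜 Nd Nc 0 :=
  ⟨0, le_rfl, fun u => by simp [hNc]⟩

theorem IsBddOn.add (hNc : ∀ v w, Nc (v + w) ≤ Nc v + Nc w) (hT : IsBddOn 𝕜 Nd Nc T)
    (hS : IsBddOn 𝕜 Nd Nc S) : IsBddOn 𝕜 Nd Nc (T + S) := by
  obtain ⟨c, hc, hcT⟩ := hT
  obtain ⟨d, hd, hdS⟩ := hS
  refine ⟨c + d, add_nonneg hc hd, fun u => ?_⟩
  calc Nc ((T + S) u) ≤ Nc (T u) + Nc (S u) := hNc _ _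
    _ ≤ c * Nd u + d * Nd u := add_le_add (hcT u) (hdS u)
    _ = (c + d) * Nd u := by ring

theorem opNormOn_zero (hNc : Nc 0 = 0) : opNormOn 𝕜 Nd Nc 0 = 0 :=
  le_antisymm (opNormOn_le_of_bound le_rfl fun u => by simp [hNc]) opNormOn_nonneg

theorem opNormOn_add_le (hNd : ∀ u, 0 ≤ Nd u) (hNc : ∀ v w, Nc (v + w) ≤ Nc v + Nc w)
    (hT : IsBddOn 𝕜 Nd Nc T) (hS : IsBddOn 𝕜 Nd Nc S) :
    opNormOn 𝕜 Nd Nc (T + S) ≤ opNormOn 𝕜 Nd Nc T + opNormOn 𝕜 Nd Nc S := by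
  refine opNormOn_le_of_bound (add_nonneg opNormOn_nonneg opNormOn_nonneg) fun u => ?_
  calc Nc ((T + S) u) ≤ Nc (T u) + Nc (S u) := hNc _ _
    _ ≤ opNormOn 𝕜 Nd Nc T * Nd u + opNormOn 𝕜 Nd Nc S * Nd u :=
      add_le_add (hT.le_opNormOn_mul hNd u) (hS.le_opNormOn_mul hNd u)
    _ = (opNormOn 𝕜 Nd Nc T + opNormOn 𝕜 Nd Nc S) * Nd u := by ring

theorem opNormOn_smul_le (hNd : ∀ u, 0 ≤ Nd u) (hNc : ∀ (c : 𝕜) v, Nc (c • v) = ‖c‖ * Nc v)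
    (hT : IsBddOn 𝕜 Nd Nc T) (c : 𝕜) :
    opNormOn 𝕜 Nd Nc (c • T) ≤ ‖c‖ * opNormOn 𝕜 Nd Nc T := by
  refine opNormOn_le_of_bound (mul_nonneg (norm_nonneg c) opNormOn_nonneg) fun u => ?_
  rw [LinearMap.smul_apply, hNc, mul_assoc]
  exact mul_le_mul_of_nonneg_left (hT.le_opNormOn_mul hNd u) (norm_nonneg c)

end OpNormOn

section OpT

variable {NA : X ⊗[𝕜] Y → ℝ} {NB : V ⊗[𝕜] W → ℝ}

theorem opT_tmul (A : E →L[𝕜] G) (B : F →L[𝕜] H) :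
    opT 𝕜 (A ⊗ₜ[𝕜] B) = TensorProduct.map (A : E →ₗ[𝕜] G) (B : F →ₗ[𝕜] H) := by
  simp [opT]

theorem isBddOn_opT (hNB : IsNormOn 𝕜 NB) (hu : IsUniformPair 𝕜 NA NB)
    (L : (X →L[𝕜] V) ⊗[𝕜] (Y →L[𝕜] W)) : IsBddOn 𝕜 NA NB (opT 𝕜 L) := by
  induction L with
  | zero => simpa using isBddOn_zero hNB.map_zero
  | tmul A B =>
    exact ⟨‖A‖ * ‖B‖, by positivity, fun u => by simpa [opT_tmul] using hu A B u⟩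
  | add L M hL hM => simpa using hL.add hNB.2.2 hM

theorem opNormOn_opT_tmul_le (hu : IsUniformPair 𝕜 NA NB) (A : X →L[𝕜] V) (B : Y →L[𝕜] W) :
    opNormOn 𝕜 NA NB (opT 𝕜 (A ⊗ₜ[𝕜] B)) ≤ ‖A‖ * ‖B‖ :=
  opNormOn_le_of_bound (by positivity) fun u => by simpa [opT_tmul] using hu A B u

theorem opNormOn_opT_add_le (hNA : IsNormOn 𝕜 NA) (hNB : IsNormOn 𝕜 NB)
    (hu : IsUniformPair 𝕜 NA NB) (L M : (X →L[𝕜] V) ⊗[𝕜] (Y →L[𝕜] W)) :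
    opNormOn 𝕜 NA NB (opT 𝕜 (L + M)) ≤
      opNormOn 𝕜 NA NB (opT 𝕜 L) + opNormOn 𝕜 NA NB (opT 𝕜 M) := by
  rw [map_add]
  exact opNormOn_add_le hNA.nonneg hNB.2.2 (isBddOn_opT hNB hu L) (isBddOn_opT hNB hu M)

theorem opNormOn_opT_smul_le (hNA : IsNormOn 𝕜 NA) (hNB : IsNormOn 𝕜 NB)
    (hu : IsUniformPair 𝕜 NA NB) (c : 𝕜) (L : (X →L[𝕜] V) ⊗[𝕜] (Y →L[𝕜] W)) :
    opNormOn 𝕜 NA NB (opT 𝕜 (c • L)) ≤ ‖c‖ * opNormOn 𝕜 NA NB (opT 𝕜 L) := by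
  rw [map_smul]
  exact opNormOn_smul_le hNA.nonneg hNB.2.1 (isBddOn_opT hNB hu L) c

theorem opNormOn_opT_le_projNorm (hNA : IsNormOn 𝕜 NA) (hNB : IsNormOn 𝕜 NB)
    (hu : IsUniformPair 𝕜 NA NB) (L : (X →L[𝕜] V) ⊗[𝕜] (Y →L[𝕜] W)) :
    opNormOn 𝕜 NA NB (opT 𝕜 L) ≤ projNorm 𝕜 L := by
  obtain ⟨S, hS⟩ := TensorProduct.exists_multiset L
  obtain ⟨l₀, rfl⟩ := Quot.exists_rep S
  refine le_csInf ⟨_, l₀, by simpa using hS, rfl⟩ ?_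
  rintro r ⟨l, rfl, rfl⟩
  calc opNormOn 𝕜 NA NB (opT 𝕜 (l.map fun p => p.1 ⊗ₜ[𝕜] p.2).sum)
      ≤ ((l.map fun p => p.1 ⊗ₜ[𝕜] p.2).map fun L => opNormOn 𝕜 NA NB (opT 𝕜 L)).sum :=
        List.le_sum_of_subadditive (fun L => opNormOn 𝕜 NA NB (opT 𝕜 L))
          (by rw [map_zero, opNormOn_zero hNB.map_zero])
          (opNormOn_opT_add_le hNA hNB hu) _
    _ ≤ (l.map fun p => ‖p.1‖ * ‖p.2‖).sum := by
        rw [List.map_map]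
        exact List.sum_le_sum fun p _ => opNormOn_opT_tmul_le hu p.1 p.2

end OpT

section Slice

def sliceRight (g : F →L[𝕜] 𝕜) : E ⊗[𝕜] F →ₗ[𝕜] E :=
  (TensorProduct.rid 𝕜 E).toLinearMap ∘ₗ TensorProduct.map LinearMap.id (g : F →ₗ[𝕜] 𝕜)

def sliceLeft (f : E →L[𝕜] 𝕜) : E ⊗[𝕜] F →ₗ[𝕜] F :=
  (TensorProduct.lid 𝕜 F).toLinearMap ∘ₗ TensorProduct.map (f : E →ₗ[𝕜] 𝕜) LinearMap.id

@[simp] theorem sliceRight_tmul (g : F →L[𝕜] 𝕜) (x : E) (y : F) :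
    sliceRight g (x ⊗ₜ[𝕜] y) = g y • x := by
  simp [sliceRight]

@[simp] theorem sliceLeft_tmul (f : E →L[𝕜] 𝕜) (x : E) (y : F) :
    sliceLeft f (x ⊗ₜ[𝕜] y) = f x • y := by
  simp [sliceLeft]

@[simp] theorem dualTensorFun_tmul (f : E →L[𝕜] 𝕜) (g : F →L[𝕜] 𝕜) (x : E) (y : F) :
    dualTensorFun 𝕜 f g (x ⊗ₜ[𝕜] y) = f x * g y := by
  simp [dualTensorFun]

theorem dualTensorFun_eq_apply_sliceRight (f : E →L[𝕜] 𝕜) (g : F →L[𝕜] 𝕜) (u : E ⊗[𝕜] F) :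
    dualTensorFun 𝕜 f g u = f (sliceRight g u) := by
  induction u with
  | zero => simp
  | tmul x y => simp [mul_comm]
  | add u v hu hv => simp [hu, hv]

/-- Expanding `u` in a Hamel basis `b` of `E` as `Σᵢ bᵢ ⊗ yᵢ`, the `i`-th coordinate of
`sliceRight g u` is `g yᵢ`; so if all slices vanish, every `yᵢ` is killed by all of `F'`. -/
theorem eq_zero_of_forall_sliceRight_eq_zero {u : E ⊗[𝕜] F}
    (h : ∀ g : F →L[𝕜] 𝕜, sliceRight g u = 0) : u = 0 := by
  classical
  let b := Module.Basis.ofVectorSpace 𝕜 E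
  let Ψ : E ⊗[𝕜] F ≃ₗ[𝕜] (Module.Basis.ofVectorSpaceIndex 𝕜 E →₀ F) :=
    (TensorProduct.congr b.repr (LinearEquiv.refl 𝕜 F)).trans
      (TensorProduct.finsuppScalarLeft 𝕜 F _)
  have repr_sliceRight (g : F →L[𝕜] 𝕜) (v : E ⊗[𝕜] F) (i) :
      b.repr (sliceRight g v) i = g (Ψ v i) := by
    induction v with
    | zero => simp
    | tmul x y => simp [Ψ, mul_comm]
    | add v w hv hw => simp [hv, hw]
  refine Ψ.map_eq_zero_iff.1 (Finsupp.ext fun i => SeparatingDual.eq_zero_of_forall_dual_eq_zero (R := 𝕜)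
    fun g => ?_)
  rw [← repr_sliceRight, h g, map_zero, Finsupp.zero_apply]

theorem eq_zero_of_forall_dualTensorFun_eq_zero {u : E ⊗[𝕜] F}
    (h : ∀ (f : E →L[𝕜] 𝕜) (g : F →L[𝕜] 𝕜), dualTensorFun 𝕜 f g u = 0) : u = 0 :=
  eq_zero_of_forall_sliceRight_eq_zero fun g =>
    SeparatingDual.eq_zero_of_forall_dual_eq_zero fun f => by
      rw [← dualTensorFun_eq_apply_sliceRight, h]

end Slice

section DualBound

open ContinuousLinearMap (apply)

variable {L : (X →L[𝕜] V) ⊗[𝕜] (Y →L[𝕜] W)} {C : ℝ}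

theorem apply_sliceLeft_apply (x : X) (φ : V →L[𝕜] 𝕜) (ψ : W →L[𝕜] 𝕜) (y : Y)
    (M : (X →L[𝕜] V) ⊗[𝕜] (Y →L[𝕜] W)) :
    ψ (sliceLeft (φ.comp (apply 𝕜 V x)) M y) = dualTensorFun 𝕜 φ ψ (opT 𝕜 M (x ⊗ₜ[𝕜] y)) := by
  induction M with
  | zero => simp
  | tmul A B => simp [opT_tmul]
  | add M M' hM hM' => simp [hM, hM']

theorem apply_sliceRight_apply (g : (Y →L[𝕜] W) →L[𝕜] 𝕜) (x : X) (φ : V →L[𝕜] 𝕜)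
    (M : (X →L[𝕜] V) ⊗[𝕜] (Y →L[𝕜] W)) :
    φ (sliceRight g M x) = g (sliceLeft (φ.comp (apply 𝕜 V x)) M) := by
  induction M with
  | zero => simp
  | tmul A B => simp [mul_comm]
  | add M M' hM hM' => simp [hM, hM']

theorem norm_sliceLeft_le (hC : 0 ≤ C)
    (hL : ∀ x y (φ : V →L[𝕜] 𝕜) (ψ : W →L[𝕜] 𝕜),
      ‖dualTensorFun 𝕜 φ ψ (opT 𝕜 L (x ⊗ₜ[𝕜] y))‖ ≤ ‖φ‖ * ‖ψ‖ * (C * (‖x‖ * ‖y‖)))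
    (x : X) (φ : V →L[𝕜] 𝕜) :
    ‖sliceLeft (φ.comp (apply 𝕜 V x)) L‖ ≤ ‖φ‖ * ‖x‖ * C := by
  refine ContinuousLinearMap.opNorm_le_bound _ (by positivity) fun y =>
    NormedSpace.norm_le_dual_bound 𝕜 _ (by positivity) fun ψ => ?_
  rw [apply_sliceLeft_apply]
  exact (hL x y φ ψ).trans_eq (by ring)

theorem norm_sliceRight_le (hC : 0 ≤ C)
    (hL : ∀ x y (φ : V →L[𝕜] 𝕜) (ψ : W →L[𝕜] 𝕜),
      ‖dualTensorFun 𝕜 φ ψ (opT 𝕜 L (x ⊗ₜ[𝕜] y))‖ ≤ ‖φ‖ * ‖ψ‖ * (C * (‖x‖ * ‖y‖)))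
    (g : (Y →L[𝕜] W) →L[𝕜] 𝕜) :
    ‖sliceRight g L‖ ≤ ‖g‖ * C := by
  refine ContinuousLinearMap.opNorm_le_bound _ (by positivity) fun x =>
    NormedSpace.norm_le_dual_bound 𝕜 _ (by positivity) fun φ => ?_
  calc ‖φ (sliceRight g L x)‖ = ‖g (sliceLeft (φ.comp (apply 𝕜 V x)) L)‖ := by
        rw [apply_sliceRight_apply]
    _ ≤ ‖g‖ * (‖φ‖ * ‖x‖ * C) := g.le_opNorm_of_le (norm_sliceLeft_le hC hL x φ)
    _ = ‖g‖ * C * ‖x‖ * ‖φ‖ := by ring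

theorem norm_dualTensorFun_le_of_forall_tmul (hC : 0 ≤ C)
    (hL : ∀ x y (φ : V →L[𝕜] 𝕜) (ψ : W →L[𝕜] 𝕜),
      ‖dualTensorFun 𝕜 φ ψ (opT 𝕜 L (x ⊗ₜ[𝕜] y))‖ ≤ ‖φ‖ * ‖ψ‖ * (C * (‖x‖ * ‖y‖)))
    (f : (X →L[𝕜] V) →L[𝕜] 𝕜) (g : (Y →L[𝕜] W) →L[𝕜] 𝕜) :
    ‖dualTensorFun 𝕜 f g L‖ ≤ ‖f‖ * ‖g‖ * C := by
  rw [dualTensorFun_eq_apply_sliceRight, mul_assoc]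
  exact f.le_opNorm_of_le (norm_sliceRight_le hC hL g)

end DualBound

section Crossnorm

variable {NA : X ⊗[𝕜] Y → ℝ} {NB : V ⊗[𝕜] W → ℝ}

theorem norm_dualTensorFun_opT_tmul_le (hNA : IsReasonableCrossnorm 𝕜 NA)
    (hNB : IsReasonableCrossnorm 𝕜 NB) (hu : IsUniformPair 𝕜 NA NB)
    (L : (X →L[𝕜] V) ⊗[𝕜] (Y →L[𝕜] W)) (x : X) (y : Y) (φ : V →L[𝕜] 𝕜) (ψ : W →L[𝕜] 𝕜) :
    ‖dualTensorFun 𝕜 φ ψ (opT 𝕜 L (x ⊗ₜ[𝕜] y))‖ ≤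
      ‖φ‖ * ‖ψ‖ * (opNormOn 𝕜 NA NB (opT 𝕜 L) * (‖x‖ * ‖y‖)) := by
  refine (hNB.2.2 φ ψ _).trans (mul_le_mul_of_nonneg_left ?_ (by positivity))
  calc NB (opT 𝕜 L (x ⊗ₜ[𝕜] y)) ≤ opNormOn 𝕜 NA NB (opT 𝕜 L) * NA (x ⊗ₜ[𝕜] y) :=
        (isBddOn_opT hNB.1 hu L).le_opNormOn_mul hNA.1.nonneg _
    _ ≤ opNormOn 𝕜 NA NB (opT 𝕜 L) * (‖x‖ * ‖y‖) :=
        mul_le_mul_of_nonneg_left (hNA.2.1 x y) opNormOn_nonneg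

theorem norm_dualTensorFun_le_opNormOn_opT (hNA : IsReasonableCrossnorm 𝕜 NA)
    (hNB : IsReasonableCrossnorm 𝕜 NB) (hu : IsUniformPair 𝕜 NA NB)
    (f : (X →L[𝕜] V) →L[𝕜] 𝕜) (g : (Y →L[𝕜] W) →L[𝕜] 𝕜) (L : (X →L[𝕜] V) ⊗[𝕜] (Y →L[𝕜] W)) :
    ‖dualTensorFun 𝕜 f g L‖ ≤ ‖f‖ * ‖g‖ * opNormOn 𝕜 NA NB (opT 𝕜 L) :=
  norm_dualTensorFun_le_of_forall_tmul opNormOn_nonneg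
    (norm_dualTensorFun_opT_tmul_le hNA hNB hu L) f g

theorem injNorm_le_opNormOn_opT (hNA : IsReasonableCrossnorm 𝕜 NA)
    (hNB : IsReasonableCrossnorm 𝕜 NB) (hu : IsUniformPair 𝕜 NA NB)
    (L : (X →L[𝕜] V) ⊗[𝕜] (Y →L[𝕜] W)) :
    injNorm 𝕜 L ≤ opNormOn 𝕜 NA NB (opT 𝕜 L) := by
  refine Real.sSup_le ?_ opNormOn_nonneg
  rintro r ⟨f, g, hf, hg, rfl⟩
  calc ‖dualTensorFun 𝕜 f g L‖ ≤ ‖f‖ * ‖g‖ * opNormOn 𝕜 NA NB (opT 𝕜 L) :=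
        norm_dualTensorFun_le_opNormOn_opT hNA hNB hu f g L
    _ ≤ 1 * 1 * opNormOn 𝕜 NA NB (opT 𝕜 L) := by gcongr; exact opNormOn_nonneg
    _ = opNormOn 𝕜 NA NB (opT 𝕜 L) := by ring

theorem opNormOn_opT_eq_zero_iff (hNA : IsReasonableCrossnorm 𝕜 NA)
    (hNB : IsReasonableCrossnorm 𝕜 NB) (hu : IsUniformPair 𝕜 NA NB)
    (L : (X →L[𝕜] V) ⊗[𝕜] (Y →L[𝕜] W)) :
    opNormOn 𝕜 NA NB (opT 𝕜 L) = 0 ↔ L = 0 := by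
  refine ⟨fun hL => eq_zero_of_forall_dualTensorFun_eq_zero fun f g => ?_, ?_⟩
  · simpa [hL] using norm_dualTensorFun_le_opNormOn_opT hNA hNB hu f g L
  · rintro rfl
    rw [map_zero, opNormOn_zero hNB.1.map_zero]

end Crossnorm

end

/-- Main Theorem: `‖L‖_ε ≤ ‖L‖_{[α,α]} ≤ ‖L‖_π`, hence `‖·‖_{[α,α]}` is a
reasonable crossnorm on `B[X,V] ⊗ B[Y,W]`. -/
theorem stmt9 (NA : X ⊗[𝕜] Y → ℝ) (NB : V ⊗[𝕜] W → ℝ)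
    (hNA : IsReasonableCrossnorm 𝕜 NA) (hNB : IsReasonableCrossnorm 𝕜 NB)
    (hu : IsUniformPair 𝕜 NA NB) :
    (∀ L : (X →L[𝕜] V) ⊗[𝕜] (Y →L[𝕜] W),
      injNorm 𝕜 L ≤ opNormOn 𝕜 NA NB (opT 𝕜 L) ∧
      opNormOn 𝕜 NA NB (opT 𝕜 L) ≤ projNorm 𝕜 L) ∧
    IsReasonableCrossnorm 𝕜
      (fun L : (X →L[𝕜] V) ⊗[𝕜] (Y →L[𝕜] W) => opNormOn 𝕜 NA NB (opT 𝕜 L)) :=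
  ⟨fun L => ⟨injNorm_le_opNormOn_opT hNA hNB hu L, opNormOn_opT_le_projNorm hNA.1 hNB.1 hu L⟩,
    IsNormOn.of_smul_le (opNormOn_opT_eq_zero_iff hNA hNB hu) (opNormOn_opT_add_le hNA.1 hNB.1 hu)
      (opNormOn_opT_smul_le hNA.1 hNB.1 hu),
    opNormOn_opT_tmul_le hu, norm_dualTensorFun_le_opNormOn_opT hNA hNB hu⟩
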